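/- arXiv:1311.7105 — 5 statements merged into one kernel-verified Lean document; each statement's English description precedes it below -/
import Mathlib

section
/- Let A ∈ ℝ^{n×n} be a symmetric matrix with ‖A‖_F = 1. Let 0 < δ ≤ ε < 1, let λ ∈ ℝ with |λ| ≥ 3ε, and let v ∈ ℝⁿ be a unit vector such that the matrix B = A − λ·(v vᵀ) satisfies ‖Bv‖₂ ≤ δ. Then ‖B‖_F² ≤ 1 − 3ε². -/
/-! Write `q = vᵀAv`. Expanding the square, `‖A - λ vvᵀ‖_F² = ‖A‖_F² - 2λq + λ²‖v‖⁴ = 1 - 2λq + λ²`.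
Since `vᵀBv = q - λ`, Cauchy–Schwarz gives `|q - λ| ≤ ‖Bv‖ ≤ δ ≤ ε`, hence
`λ² - 2λq = -λ² - 2λ(q - λ) ≤ -|λ|² + 2ε|λ| ≤ -3ε²` as soon as `|λ| ≥ 3ε`. -/

open Matrix

section RankOneUpdate

variable {m R : Type*} [Fintype m] [CommRing R]

theorem sum_sq_sub_smul_vecMulVec (A : Matrix m m R) (c : R) (u w : m → R) :
    ∑ i, ∑ j, (A - c • vecMulVec u w) i j ^ 2 =
      ∑ i, ∑ j, A i j ^ 2 - 2 * c * (u ⬝ᵥ A *ᵥ w) + c ^ 2 * ((∑ i, u i ^ 2) * ∑ j, w j ^ 2) := by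
  calc ∑ i, ∑ j, (A - c • vecMulVec u w) i j ^ 2
      = ∑ i, ∑ j, (A i j ^ 2 - 2 * c * (u i * (A i j * w j)) + c ^ 2 * (u i ^ 2 * w j ^ 2)) := by
        refine Finset.sum_congr rfl fun i _ => Finset.sum_congr rfl fun j _ => ?_
        simp only [Matrix.sub_apply, Matrix.smul_apply, vecMulVec_apply, smul_eq_mul]
        ring
    _ = _ := by
        simp only [Finset.sum_add_distrib, Finset.sum_sub_distrib, ← Finset.mul_sum,
          Finset.sum_mul_sum, dotProduct, mulVec]

theorem dotProduct_sub_smul_vecMulVec_mulVec (A : Matrix m m R) (c : R) (v : m → R) :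
    v ⬝ᵥ (A - c • vecMulVec v v) *ᵥ v = v ⬝ᵥ A *ᵥ v - c * (v ⬝ᵥ v) ^ 2 := by
  simp only [sub_mulVec, smul_mulVec, vecMulVec_mulVec, dotProduct_sub, dotProduct_smul,
    MulOpposite.smul_eq_mul_unop, MulOpposite.unop_op, smul_eq_mul]
  ring

end RankOneUpdate

theorem sq_sub_two_mul_le_of_abs_sub_le {δ ε lam q : ℝ} (hδε : δ ≤ ε) (hlam : 3 * ε ≤ |lam|)
    (hq : |q - lam| ≤ δ) : lam ^ 2 - 2 * lam * q ≤ -3 * ε ^ 2 := by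
  have hε : 0 ≤ ε := by linarith [abs_nonneg (q - lam)]
  have hcross : -(lam * (q - lam)) ≤ |lam| * ε := by
    calc -(lam * (q - lam)) ≤ |lam * (q - lam)| := neg_le_abs _
      _ = |lam| * |q - lam| := abs_mul _ _
      _ ≤ |lam| * ε := mul_le_mul_of_nonneg_left (hq.trans hδε) (abs_nonneg _)
  -- `|λ|² - 2ε|λ| - 3ε² = (|λ| - 3ε)(|λ| + ε) ≥ 0`
  nlinarith [sq_abs lam, mul_nonneg (sub_nonneg.2 hlam) (add_nonneg (abs_nonneg lam) hε)]

theorem stmt_1_general {n : ℕ} (A : Matrix (Fin n) (Fin n) ℝ)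
    (hAF : Real.sqrt (∑ i, ∑ j, A i j ^ 2) = 1)
    (δ ε : ℝ) (hδε : δ ≤ ε)
    (lam : ℝ) (hlam : 3 * ε ≤ |lam|)
    (v : Fin n → ℝ) (hv : Real.sqrt (∑ i, v i ^ 2) = 1)
    (B : Matrix (Fin n) (Fin n) ℝ) (hB : B = A - lam • vecMulVec v v)
    (hBv : Real.sqrt (∑ i, (B.mulVec v i) ^ 2) ≤ δ) :
    ∑ i, ∑ j, B i j ^ 2 ≤ 1 - 3 * ε ^ 2 := by
  obtain ⟨hδ, hBv2⟩ := Real.sqrt_le_iff.1 hBv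
  have hA2 : ∑ i, ∑ j, A i j ^ 2 = 1 := Real.sqrt_eq_one.1 hAF
  have hv2 : ∑ i, v i ^ 2 = 1 := Real.sqrt_eq_one.1 hv
  have hvv : v ⬝ᵥ v = 1 := by simpa only [dotProduct, sq] using hv2
  have hRayleigh : |v ⬝ᵥ A *ᵥ v - lam| ≤ δ := by
    have hCS := Finset.sum_mul_sq_le_sq_mul_sq Finset.univ v (B *ᵥ v)
    rw [hv2, one_mul] at hCS
    refine abs_le_of_sq_le_sq ?_ hδ
    calc (v ⬝ᵥ A *ᵥ v - lam) ^ 2 = (v ⬝ᵥ B *ᵥ v) ^ 2 := by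
          rw [hB, dotProduct_sub_smul_vecMulVec_mulVec, hvv, one_pow, mul_one]
      _ ≤ δ ^ 2 := hCS.trans hBv2
  rw [hB, sum_sq_sub_smul_vecMulVec, hA2, hv2, one_mul]
  linarith [sq_sub_two_mul_le_of_abs_sub_le hδε hlam hRayleigh]

/-- If A is symmetric with Frobenius norm 1, 0 < δ ≤ ε < 1, |λ| ≥ 3ε,
v is a unit vector, and B = A − λ·v vᵀ satisfies ‖Bv‖₂ ≤ δ, then ‖B‖_F² ≤ 1 − 3ε². -/
theorem stmt_1 {n : ℕ} (A : Matrix (Fin n) (Fin n) ℝ) (hA : A.IsSymm)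
    (hAF : Real.sqrt (∑ i, ∑ j, A i j ^ 2) = 1)
    (δ ε : ℝ) (hδ : 0 < δ) (hδε : δ ≤ ε) (hε : ε < 1)
    (lam : ℝ) (hlam : 3 * ε ≤ |lam|)
    (v : Fin n → ℝ) (hv : Real.sqrt (∑ i, v i ^ 2) = 1)
    (B : Matrix (Fin n) (Fin n) ℝ) (hB : B = A - lam • vecMulVec v v)
    (hBv : Real.sqrt (∑ i, (B.mulVec v i) ^ 2) ≤ δ) :
    ∑ i, ∑ j, B i j ^ 2 ≤ 1 - 3 * ε ^ 2 :=
  stmt_1_general A hAF δ ε hδε lam hlam v hv B hB hBv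
end

section
/- Let p : ℝⁿ → ℝ be a degree-2 polynomial, p(x) = Σ_{1≤i≤j≤n} a_{ij} x_i x_j + Σ_{1≤i≤n} b_i x_i + C, and define SS(p) = Σ_{1≤i≤j≤n} a_{ij}² + Σ_{1≤i≤n} b_i². Then, with respect to x ∼ N(0,1)ⁿ, one has SS(p) ≤ Var(p) ≤ 2·SS(p). -/
/-!
In the Hermite basis `xᵢxⱼ = He₁(xᵢ)He₁(xⱼ)` for `i ≠ j`, `xᵢ² = He₂(xᵢ) + 1` and `xᵢ = He₁(xᵢ)`,
so up to a constant `p` is a combination of products `∏ₖ He_{αₖ}(xₖ)` with distinct multi-indices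
`α ≠ 0` of total degree at most `2`. Under the standard Gaussian these products are centred and
orthogonal with squared norm `∏ₖ αₖ!`, so `Var(p)` is `SS(p)` with each square weighted by `1`,
or by `2` for the diagonal coefficients `a_{ii}`. The orthogonality of the `Heₖ` comes from
Stein's identity `E[X f(X)] = E[f'(X)]`, which turns pairing with `Heₖ` into taking `k` derivatives.
-/

open MeasureTheory ProbabilityTheory Finset
open scoped Nat

noncomputable section

section Hermite

open Polynomial

lemma gaussianPDFReal_std :
    gaussianPDFReal 0 1 = fun x => (Real.sqrt (2 * Real.pi))⁻¹ * Real.exp (-x ^ 2 / 2) := by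
  simp [gaussianPDFReal_def]

lemma hasDerivAt_gaussianPDFReal_std (x : ℝ) :
    HasDerivAt (gaussianPDFReal 0 1) (-x * gaussianPDFReal 0 1 x) x := by
  rw [gaussianPDFReal_std]
  exact (((hasDerivAt_pow 2 x).fun_neg.div_const 2).exp.const_mul _).congr_deriv (by ring)

lemma integrable_eval_gaussianReal (P : ℝ[X]) (μ : ℝ) (v : NNReal) :
    Integrable (fun x => P.eval x) (gaussianReal μ v) := by
  simp_rw [eval_eq_sum_range]
  refine integrable_finsetSum _ fun i _ => Integrable.const_mul ?_ _
  exact (memLp_id_gaussianReal (μ := μ) (v := v) i).integrable_norm_pow'.mono' (by fun_prop)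
    (ae_of_all _ fun x => by simp)

lemma integrable_gaussianPDFReal_mul_eval (P : ℝ[X]) (μ : ℝ) {v : NNReal} (hv : v ≠ 0) :
    Integrable fun x => gaussianPDFReal μ v x * P.eval x := by
  have h := integrable_eval_gaussianReal P μ v
  rw [gaussianReal_of_var_ne_zero μ hv, integrable_withDensity_iff_integrable_smul'
    (measurable_gaussianPDF μ v) (ae_of_all _ fun _ => gaussianPDF_lt_top)] at h
  simpa [toReal_gaussianPDF] using h

lemma integral_mul_eval_gaussianReal (P : ℝ[X]) :
    ∫ x, x * P.eval x ∂gaussianReal 0 1 = ∫ x, (derivative P).eval x ∂gaussianReal 0 1 := by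
  simp only [integral_gaussianReal_eq_integral_smul one_ne_zero, smul_eq_mul]
  have hderiv (x : ℝ) : HasDerivAt (fun x => gaussianPDFReal 0 1 x * P.eval x)
      (gaussianPDFReal 0 1 x * (derivative P).eval x
        - gaussianPDFReal 0 1 x * (x * P.eval x)) x :=
    ((hasDerivAt_gaussianPDFReal_std x).mul (P.hasDerivAt x)).congr_deriv (by ring)
  have hXP (x : ℝ) : x * P.eval x = (X * P).eval x := by simp
  have hint := fun Q : ℝ[X] => integrable_gaussianPDFReal_mul_eval Q 0 one_ne_zero
  simp_rw [hXP] at hderiv ⊢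
  have := integral_eq_zero_of_hasDerivAt_of_integrable hderiv
    ((hint _).sub (hint _)) (hint P)
  rw [integral_sub (hint _) (hint _)] at this
  linarith

def realHermite (k : ℕ) : ℝ[X] := (hermite k).map (Int.castRingHom ℝ)

lemma realHermite_zero : realHermite 0 = 1 := by simp [realHermite]

lemma realHermite_succ (k : ℕ) :
    realHermite (k + 1) = X * realHermite k - derivative (realHermite k) := by
  simp [realHermite, hermite_succ, Polynomial.map_sub, derivative_map]

lemma realHermite_one : realHermite 1 = X := by simp [realHermite]

lemma realHermite_two : realHermite 2 = X ^ 2 - 1 := by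
  rw [realHermite_succ, realHermite_one]
  simp [sq]

lemma natDegree_realHermite (k : ℕ) : (realHermite k).natDegree = k := by
  rw [realHermite, (hermite_monic k).natDegree_map, natDegree_hermite]

lemma iterate_derivative_realHermite_self (k : ℕ) :
    derivative^[k] (realHermite k) = C (k ! : ℝ) := by
  have hdeg : (derivative^[k] (realHermite k)).natDegree ≤ 0 := by
    simpa [natDegree_realHermite] using natDegree_iterate_derivative (realHermite k) k
  rw [eq_C_of_natDegree_le_zero hdeg, coeff_iterate_derivative, zero_add,
    Nat.descFactorial_self]
  simp [realHermite, coeff_hermite_self]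

lemma integral_eval_realHermite_mul (k : ℕ) (P : ℝ[X]) :
    ∫ x, (realHermite k).eval x * P.eval x ∂gaussianReal 0 1
      = ∫ x, (derivative^[k] P).eval x ∂gaussianReal 0 1 := by
  induction k generalizing P with
  | zero => simp [realHermite_zero]
  | succ k ih =>
    set H := realHermite k
    have hint := fun Q : ℝ[X] => integrable_eval_gaussianReal Q 0 1
    calc ∫ x, (realHermite (k + 1)).eval x * P.eval x ∂gaussianReal 0 1
        = ∫ x, x * (H * P).eval x ∂gaussianReal 0 1
          - ∫ x, (derivative H * P).eval x ∂gaussianReal 0 1 := by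
          have hXHP : Integrable (fun x => x * (H * P).eval x) (gaussianReal 0 1) :=
            (hint (X * (H * P))).congr (ae_of_all _ fun x => by simp)
          rw [← integral_sub hXHP (hint _)]
          congr 1 with x
          simp only [realHermite_succ, eval_sub, eval_mul, eval_X, H]
          ring
      _ = ∫ x, (H * derivative P).eval x ∂gaussianReal 0 1 := by
          rw [integral_mul_eval_gaussianReal, derivative_mul,
            ← integral_sub (hint _) (hint _)]
          simp
      _ = ∫ x, (derivative^[k + 1] P).eval x ∂gaussianReal 0 1 := by
          simp only [eval_mul]
          rw [ih, Function.iterate_succ_apply]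

lemma integral_eval_realHermite_mul_eval_realHermite (m k : ℕ) :
    ∫ x, (realHermite m).eval x * (realHermite k).eval x ∂gaussianReal 0 1
      = if m = k then (k ! : ℝ) else 0 := by
  rcases lt_trichotomy m k with hmk | rfl | hkm
  · rw [if_neg hmk.ne]
    simp_rw [mul_comm ((realHermite m).eval _), integral_eval_realHermite_mul,
      iterate_derivative_eq_zero ((natDegree_realHermite m).trans_lt hmk)]
    simp
  · simp [integral_eval_realHermite_mul, iterate_derivative_realHermite_self]
  · rw [if_neg hkm.ne', integral_eval_realHermite_mul,
      iterate_derivative_eq_zero ((natDegree_realHermite k).trans_lt hkm)]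
    simp

end Hermite

section HermiteProd

variable {ι : Type*} [Fintype ι]

def hermiteProd (α : ι → ℕ) (x : ι → ℝ) : ℝ := ∏ k, (realHermite (α k)).eval (x k)

lemma hermiteProd_zero : hermiteProd (0 : ι → ℕ) = 1 := by
  ext x
  simp [hermiteProd, realHermite_zero]

lemma hermiteProd_add {α β : ι → ℕ} (h : ∀ k, α k = 0 ∨ β k = 0) (x : ι → ℝ) :
    hermiteProd (α + β) x = hermiteProd α x * hermiteProd β x := by
  rw [hermiteProd, hermiteProd, hermiteProd, ← prod_mul_distrib]
  refine prod_congr rfl fun k _ => ?_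
  rcases h k with hk | hk <;> simp [hk, realHermite_zero]

lemma hermiteProd_single [DecidableEq ι] (i : ι) (m : ℕ) (x : ι → ℝ) :
    hermiteProd (Pi.single i m) x = (realHermite m).eval (x i) := by
  rw [hermiteProd, prod_eq_single i (fun k _ hk => by simp [hk, realHermite_zero])
    (fun h => absurd (mem_univ i) h), Pi.single_eq_same]

lemma continuous_hermiteProd (α : ι → ℕ) : Continuous (hermiteProd α) :=
  continuous_finsetProd _ fun k _ => (realHermite (α k)).continuous.comp (continuous_apply k)

lemma integral_hermiteProd_mul_hermiteProd (α β : ι → ℕ) :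
    ∫ x, hermiteProd α x * hermiteProd β x ∂Measure.pi (fun _ : ι => gaussianReal 0 1)
      = if α = β then ∏ k, ((α k)! : ℝ) else 0 := by
  simp_rw [hermiteProd, ← prod_mul_distrib]
  rw [integral_fintype_prod_eq_prod
    (f := fun k y => (realHermite (α k)).eval y * (realHermite (β k)).eval y)]
  simp_rw [integral_eval_realHermite_mul_eval_realHermite]
  split_ifs with h
  · simp [h]
  · obtain ⟨k, hk⟩ := Function.ne_iff.1 h
    exact prod_eq_zero (mem_univ k) (if_neg hk)

lemma integral_hermiteProd (α : ι → ℕ) :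
    ∫ x, hermiteProd α x ∂Measure.pi (fun _ : ι => gaussianReal 0 1)
      = if α = 0 then 1 else 0 := by
  have h := integral_hermiteProd_mul_hermiteProd α 0
  simp only [hermiteProd_zero, Pi.one_apply, mul_one] at h
  rw [h]
  split_ifs with hα <;> simp [hα]

lemma memLp_two_hermiteProd (α : ι → ℕ) :
    MemLp (hermiteProd α) 2 (Measure.pi fun _ : ι => gaussianReal 0 1) := by
  refine (memLp_two_iff_integrable_sq (continuous_hermiteProd α).aestronglyMeasurable).2 ?_
  simp_rw [sq, hermiteProd, ← prod_mul_distrib]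
  exact Integrable.fintype_prod fun k => by
    simpa using integrable_eval_gaussianReal (realHermite (α k) * realHermite (α k)) 0 1

lemma covariance_hermiteProd {α β : ι → ℕ} (hα : α ≠ 0) (hβ : β ≠ 0) :
    cov[hermiteProd α, hermiteProd β; Measure.pi fun _ : ι => gaussianReal 0 1]
      = if α = β then ∏ k, ((α k)! : ℝ) else 0 := by
  rw [covariance_eq_sub (memLp_two_hermiteProd α) (memLp_two_hermiteProd β)]
  simp only [Pi.mul_apply, integral_hermiteProd_mul_hermiteProd, integral_hermiteProd,
    if_neg hα, if_neg hβ, mul_zero, sub_zero]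

end HermiteProd

lemma variance_fun_sum_of_pairwise_covariance_eq_zero {Ω κ : Type*} [MeasurableSpace Ω]
    {μ : Measure Ω} [IsFiniteMeasure μ] {s : Finset κ} {X : κ → Ω → ℝ}
    (hX : ∀ i ∈ s, MemLp (X i) 2 μ) (hcov : (s : Set κ).Pairwise fun i j => cov[X i, X j; μ] = 0) :
    Var[fun ω => ∑ i ∈ s, X i ω; μ] = ∑ i ∈ s, Var[X i; μ] := by
  rw [variance_fun_sum' hX]
  refine sum_congr rfl fun i hi => ?_
  rw [sum_eq_single_of_mem i hi fun j hj hji => hcov hi hj hji.symm,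
    covariance_self (hX i hi).aemeasurable]

lemma variance_sum_hermiteProd_add_const {ι κ : Type*} [Fintype ι] {s : Finset κ}
    (c : κ → ℝ) {α : κ → ι → ℕ} (hα : Set.InjOn α s) (hα0 : ∀ t ∈ s, α t ≠ 0) (K : ℝ) :
    Var[fun x => ∑ t ∈ s, c t * hermiteProd (α t) x + K;
        Measure.pi fun _ : ι => gaussianReal 0 1]
      = ∑ t ∈ s, c t ^ 2 * ∏ k, ((α t k)! : ℝ) := by
  have hmem (t : κ) : MemLp (fun x => c t * hermiteProd (α t) x) 2
      (Measure.pi fun _ : ι => gaussianReal 0 1) :=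
    (memLp_two_hermiteProd (α t)).const_mul (c t)
  rw [variance_add_const (memLp_finsetSum s fun t _ => hmem t).aestronglyMeasurable,
    variance_fun_sum_of_pairwise_covariance_eq_zero (fun t _ => hmem t)]
  · refine sum_congr rfl fun t ht => ?_
    rw [variance_const_mul, ← covariance_self (memLp_two_hermiteProd _).aemeasurable,
      covariance_hermiteProd (hα0 t ht) (hα0 t ht), if_pos rfl]
  · intro t ht u hu htu
    rw [covariance_const_mul_left, covariance_const_mul_right,
      covariance_hermiteProd (hα0 t ht) (hα0 u hu), if_neg (hα.ne ht hu htu)]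
    simp

lemma one_le_prod_factorial {ι : Type*} (s : Finset ι) (α : ι → ℕ) :
    1 ≤ ∏ k ∈ s, ((α k)! : ℝ) := by
  exact_mod_cast Nat.one_le_iff_ne_zero.2 (prod_ne_zero_iff.2 fun k _ => (α k).factorial_ne_zero)

lemma prod_factorial_le_factorial_sum {ι : Type*} (s : Finset ι) (α : ι → ℕ) :
    ∏ k ∈ s, ((α k)! : ℝ) ≤ ((∑ k ∈ s, α k)! : ℕ) := by
  exact_mod_cast Nat.le_of_dvd (Nat.factorial_pos _) (Nat.prod_factorial_dvd_factorial_sum s α)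

/-- `.inl ⟨i, j⟩` (with `i ≤ j` on `support`) indexes the monomial `xᵢxⱼ`, `.inr i` indexes `xᵢ`. -/
abbrev QuadIndex (n : ℕ) := (Σ _ : Fin n, Fin n) ⊕ Fin n

namespace QuadIndex

variable {n : ℕ}

def support (n : ℕ) : Finset (QuadIndex n) := (univ.sigma fun i => Ici i).disjSum univ

def multiIndex : QuadIndex n → Fin n → ℕ
  | .inl ⟨i, j⟩ => Pi.single i 1 + Pi.single j 1
  | .inr i => Pi.single i 1

def coeff (a : Fin n → Fin n → ℝ) (b : Fin n → ℝ) : QuadIndex n → ℝ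
  | .inl ⟨i, j⟩ => a i j
  | .inr i => b i

lemma sum_support {M : Type*} [AddCommMonoid M] (f : QuadIndex n → M) :
    ∑ t ∈ support n, f t = ∑ i, ∑ j ∈ Ici i, f (.inl ⟨i, j⟩) + ∑ i, f (.inr i) := by
  rw [support, sum_disjSum, sum_sigma]

lemma sum_multiIndex_inl (i j : Fin n) : ∑ k, multiIndex (.inl ⟨i, j⟩) k = 2 := by
  simp [multiIndex, sum_add_distrib]

lemma sum_multiIndex_inr (i : Fin n) : ∑ k, multiIndex (.inr i) k = 1 := by
  simp [multiIndex]

lemma sum_multiIndex_le_two (t : QuadIndex n) : ∑ k, multiIndex t k ≤ 2 := by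
  rcases t with ⟨i, j⟩ | i
  · exact (sum_multiIndex_inl i j).le
  · exact (sum_multiIndex_inr i).trans_le one_le_two

lemma multiIndex_ne_zero (t : QuadIndex n) : multiIndex t ≠ 0 := by
  intro h
  rcases t with ⟨i, j⟩ | i
  · simpa [h] using sum_multiIndex_inl i j
  · simpa [h] using sum_multiIndex_inr i

lemma injOn_multiIndex : Set.InjOn multiIndex (support n : Set (QuadIndex n)) := by
  rintro (⟨i, j⟩ | i) hs (⟨i', j'⟩ | i') ht h
  · simp only [support, mem_coe, inl_mem_disjSum, mem_sigma, mem_univ, mem_Ici, true_and]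
      at hs ht
    have h₁ := congrFun h i
    have h₂ := congrFun h j
    have h₃ := congrFun h i'
    have h₄ := congrFun h j'
    simp only [multiIndex, Pi.add_apply, Pi.single_apply] at h₁ h₂ h₃ h₄
    obtain ⟨rfl, rfl⟩ : i = i' ∧ j = j' := by grind
    rfl
  · simpa [sum_multiIndex_inl, sum_multiIndex_inr] using congrArg (fun α => ∑ k, α k) h
  · simpa [sum_multiIndex_inl, sum_multiIndex_inr] using congrArg (fun α => ∑ k, α k) h
  · simpa [multiIndex, Pi.single_apply] using congrFun h i

lemma hermiteProd_multiIndex_inl (i j : Fin n) (x : Fin n → ℝ) :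
    hermiteProd (multiIndex (.inl ⟨i, j⟩)) x = x i * x j - if i = j then 1 else 0 := by
  simp only [multiIndex]
  by_cases hij : i = j
  · subst hij
    rw [← Pi.single_add, hermiteProd_single, realHermite_two, if_pos rfl]
    simp [sq]
  · have hdisj (k : Fin n) :
        (Pi.single i 1 : Fin n → ℕ) k = 0 ∨ (Pi.single j 1 : Fin n → ℕ) k = 0 := by
      by_cases hk : k = i
      · exact Or.inr (Pi.single_eq_of_ne (hk ▸ hij) _)
      · exact Or.inl (Pi.single_eq_of_ne hk _)
    rw [hermiteProd_add hdisj, hermiteProd_single, hermiteProd_single, realHermite_one,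
      if_neg hij]
    simp

lemma hermiteProd_multiIndex_inr (i : Fin n) (x : Fin n → ℝ) :
    hermiteProd (multiIndex (.inr i)) x = x i := by
  simp [multiIndex, hermiteProd_single, realHermite_one]

lemma sum_coeff_mul_hermiteProd (a : Fin n → Fin n → ℝ) (b : Fin n → ℝ) (x : Fin n → ℝ) :
    ∑ t ∈ support n, coeff a b t * hermiteProd (multiIndex t) x
      = (∑ i, ∑ j ∈ Ici i, a i j * x i * x j) + ∑ i, b i * x i - ∑ i, a i i := by
  simp only [coeff, sum_support, hermiteProd_multiIndex_inl, hermiteProd_multiIndex_inr, mul_sub,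
    mul_ite, mul_one, mul_zero, sum_sub_distrib, sum_ite_eq, mem_Ici, le_refl, if_true, mul_assoc]
  ring

end QuadIndex

end

/-- For a degree-2 polynomial p(x) = Σ_{i≤j} a_{ij} x_i x_j + Σ_i b_i x_i + C
and SS(p) = Σ_{i≤j} a_{ij}² + Σ_i b_i², with respect to x ∼ N(0,1)ⁿ one has
SS(p) ≤ Var(p) ≤ 2·SS(p). -/
theorem stmt_2 {n : ℕ} (a : Fin n → Fin n → ℝ) (b : Fin n → ℝ) (C : ℝ) :
    let μ : Measure (Fin n → ℝ) := Measure.pi fun _ => gaussianReal 0 1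
    let p : (Fin n → ℝ) → ℝ := fun x =>
      (∑ i, ∑ j ∈ Finset.Ici i, a i j * x i * x j) + (∑ i, b i * x i) + C
    let SS : ℝ := (∑ i, ∑ j ∈ Finset.Ici i, (a i j) ^ 2) + ∑ i, (b i) ^ 2
    SS ≤ variance p μ ∧ variance p μ ≤ 2 * SS := by
  intro μ p SS
  have hp : p = fun x => ∑ t ∈ QuadIndex.support n,
      QuadIndex.coeff a b t * hermiteProd t.multiIndex x + (C + ∑ i, a i i) := by
    funext x
    rw [QuadIndex.sum_coeff_mul_hermiteProd]
    ring
  have hvar : variance p μ = ∑ t ∈ QuadIndex.support n,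
      QuadIndex.coeff a b t ^ 2 * ∏ k, ((t.multiIndex k)! : ℝ) := by
    rw [hp]
    exact variance_sum_hermiteProd_add_const _ QuadIndex.injOn_multiIndex
      (fun t _ => t.multiIndex_ne_zero) _
  have hSS : SS = ∑ t ∈ QuadIndex.support n, QuadIndex.coeff a b t ^ 2 := by
    rw [QuadIndex.sum_support]
    rfl
  rw [hvar, hSS, mul_sum]
  constructor
  · exact sum_le_sum fun t _ => le_mul_of_one_le_right (sq_nonneg _) (one_le_prod_factorial _ _)
  · refine sum_le_sum fun t _ => ?_
    rw [mul_comm 2]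
    refine mul_le_mul_of_nonneg_left ((prod_factorial_le_factorial_sum _ _).trans ?_) (sq_nonneg _)
    exact_mod_cast Nat.factorial_le t.sum_multiIndex_le_two
end

section
/- Let {c_i}_{i=1}^n and {d_i}_{i=1}^n be sequences of non-negative reals with {c_i} non-increasing, let τ ∈ (0,1), and suppose the τ-critical index of the pair is j (in particular j is finite and 0 ≤ j ≤ n−1). Then Σ_{i=j+1}^n (c_i + d_i) ≤ (1−τ)^j · Σ_{i=1}^n (c_i + d_i). -/
/-!
Write `S i = ∑_{ℓ > i} (c ℓ + d ℓ)`. Below the critical index `c (i+1) > τ * S i`, so removing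
the first term `c (i+1) + d (i+1) ≥ c (i+1)` from `S i` leaves `S (i+1) ≤ (1 - τ) * S i`;
iterating this `j` times gives the bound.
-/

open Finset

theorem sum_Icc_eq_add_sum_Icc_add_one {M : Type*} [AddCommMonoid M] {a b : ℕ} (h : a ≤ b)
    (f : ℕ → M) : ∑ ℓ ∈ Icc a b, f ℓ = f a + ∑ ℓ ∈ Icc (a + 1) b, f ℓ := by
  rw [← insert_Icc_add_one_left_eq_Icc h, sum_insert (by simp)]

theorem sum_Icc_add_two_le_of_le_mul_sum {n i : ℕ} {c d : ℕ → ℝ} {τ : ℝ}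
    (hd : ∀ ℓ ∈ Icc 1 n, 0 ≤ d ℓ)
    (hcrit : τ * ∑ ℓ ∈ Icc (i + 1) n, (c ℓ + d ℓ) ≤ c (i + 1)) :
    ∑ ℓ ∈ Icc (i + 2) n, (c ℓ + d ℓ) ≤ (1 - τ) * ∑ ℓ ∈ Icc (i + 1) n, (c ℓ + d ℓ) := by
  rcases le_or_gt (i + 1) n with hin | hni
  · have hdi : 0 ≤ d (i + 1) := hd _ (mem_Icc.mpr ⟨by omega, hin⟩)
    rw [sum_Icc_eq_add_sum_Icc_add_one hin] at hcrit ⊢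
    linarith
  · simp [Icc_eq_empty_of_lt hni, Icc_eq_empty_of_lt (Nat.lt_succ_of_lt hni)]

theorem stmt_6_general (n : ℕ) (c d : ℕ → ℝ)
    (hd : ∀ i ∈ Finset.Icc 1 n, 0 ≤ d i)
    (τ : ℝ) (hτ1 : τ < 1)
    (j : ℕ)
    (hmin : ∀ i < j, τ * ∑ ℓ ∈ Finset.Icc (i + 1) n, (c ℓ + d ℓ) < c (i + 1)) :
    ∑ ℓ ∈ Finset.Icc (j + 1) n, (c ℓ + d ℓ) ≤
      (1 - τ) ^ j * ∑ ℓ ∈ Finset.Icc 1 n, (c ℓ + d ℓ) :=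
  le_geom (u := fun i ↦ ∑ ℓ ∈ Icc (i + 1) n, (c ℓ + d ℓ)) (by linarith) j
    fun i hi ↦ sum_Icc_add_two_le_of_le_mul_sum hd (hmin i hi).le

/-- If {c_i}, {d_i} (i = 1..n) are non-negative with {c_i} non-increasing,
τ ∈ (0,1), and j is the τ-critical index of the pair (so j ≤ n−1, c_{j+1} ≤ τ·Σ_{ℓ>j}(c_ℓ+d_ℓ),
and no smaller index satisfies this), then Σ_{i>j}(c_i+d_i) ≤ (1−τ)^j · Σ_{i=1}^n (c_i+d_i). -/
theorem stmt_6 (n : ℕ) (c d : ℕ → ℝ)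
    (hc : ∀ i ∈ Finset.Icc 1 n, 0 ≤ c i) (hd : ∀ i ∈ Finset.Icc 1 n, 0 ≤ d i)
    (hmono : ∀ i j, 1 ≤ i → i ≤ j → j ≤ n → c j ≤ c i)
    (τ : ℝ) (hτ0 : 0 < τ) (hτ1 : τ < 1)
    (j : ℕ) (hjn : j ≤ n - 1)
    (hcrit : c (j + 1) ≤ τ * ∑ ℓ ∈ Finset.Icc (j + 1) n, (c ℓ + d ℓ))
    (hmin : ∀ i < j, τ * ∑ ℓ ∈ Finset.Icc (i + 1) n, (c ℓ + d ℓ) < c (i + 1)) :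
    ∑ ℓ ∈ Finset.Icc (j + 1) n, (c ℓ + d ℓ) ≤
      (1 - τ) ^ j * ∑ ℓ ∈ Finset.Icc 1 n, (c ℓ + d ℓ) :=
  stmt_6_general n c d hd τ hτ1 j hmin
end

section
/- There exist absolute constants C > 0 (a positive integer) and C' > 0 such that for every ε = 2^{-j} with j ≥ 0 an integer, there exists a multiset T = {t₁, …, t_{4/ε}} of 4/ε real values, each of the form a/(C/ε) with a an integer satisfying |a| ≤ C'·(1/ε)·log(1/ε)^{C'}, such that the uniform distribution D_T over T satisfies d_K(D_T, Z) ≤ ε, where Z ∼ N(0,1) is a standard Gaussian. -/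
/-!
Put the `R = 4 / ε` points at the Gaussian quantiles `qᵢ = Φ⁻¹((2i + 1) / (2R))`: for monotone
points whose CDF values are within `β` of these bin centres, the empirical CDF is within
`1 / (2R) + β` of `Φ` everywhere. Rounding each `qᵢ` down to the grid `ε ℤ` moves `Φ` by at most
`2ε / 5`, since the standard Gaussian density is below `2 / 5`, giving `ε / 8 + 2ε / 5 ≤ ε`.
The tail bound `Φ(-x) ≤ e⁻ˣ` for `x ≥ 2` keeps every quantile inside `(-(j + 3), j + 3)` when
`ε = 2⁻ʲ`, so the numerators are at most `(j + 3) 2ʲ = O(ε⁻¹ log (1 / ε))`. For `ε ∈ {1, 1/2}`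
the point mass at `0` is already within `1/2`.
-/

open MeasureTheory ProbabilityTheory

/-- The Kolmogorov distance between two measures on ℝ. -/
noncomputable def kolDist (μ ν : Measure ℝ) : ℝ :=
  ⨆ t : ℝ, |(μ (Set.Iic t)).toReal - (ν (Set.Iic t)).toReal|

/-- The uniform distribution over the multiset {t₁, …, t_R} of reals. -/
noncomputable def unifMulti {R : ℕ} (t : Fin R → ℝ) : Measure ℝ :=
  (R : ENNReal)⁻¹ • ∑ i, Measure.dirac (t i)

open Real Set
open scoped Finset

local notation "Φ" => cdf (gaussianReal 0 1)

lemma exists_cdf_eq {μ : Measure ℝ} [IsProbabilityMeasure μ] (hμ : Continuous (cdf μ))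
    {p : ℝ} (hp : p ∈ Ioo 0 1) : ∃ q, cdf μ q = p := by
  obtain ⟨a, ha⟩ := ((tendsto_cdf_atBot μ).eventually (gt_mem_nhds hp.1)).exists
  obtain ⟨b, hb⟩ := ((tendsto_cdf_atTop μ).eventually (lt_mem_nhds hp.2)).exists
  exact intermediate_value_univ a b hμ ⟨ha.le, hb.le⟩

lemma exists_strictMono_cdf_eq {μ : Measure ℝ} [IsProbabilityMeasure μ]
    (hμ : Continuous (cdf μ)) {ι : Type*} [Preorder ι] {p : ι → ℝ} (hp : StrictMono p)
    (hp01 : ∀ i, p i ∈ Ioo 0 1) : ∃ q : ι → ℝ, StrictMono q ∧ ∀ i, cdf μ (q i) = p i := by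
  choose q hq using fun i ↦ exists_cdf_eq hμ (hp01 i)
  exact ⟨q, fun i j hij ↦ (monotone_cdf μ).reflect_lt (by simpa only [hq] using hp hij), hq⟩

lemma gaussianPDFReal_zero_one (x : ℝ) :
    gaussianPDFReal 0 1 x = (√(2 * π))⁻¹ * exp (-x ^ 2 / 2) := by
  simp [gaussianPDFReal]

lemma gaussianPDFReal_zero_one_le (x : ℝ) : gaussianPDFReal 0 1 x ≤ 2 / 5 := by
  have hπ : 5 / 2 ≤ √(2 * π) := Real.le_sqrt_of_sq_le (by nlinarith [pi_gt_d2])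
  rw [gaussianPDFReal_zero_one]
  calc (√(2 * π))⁻¹ * exp (-x ^ 2 / 2) ≤ (5 / 2)⁻¹ * 1 := by
        gcongr
        exact exp_le_one_iff.2 (by nlinarith [sq_nonneg x])
    _ = 2 / 5 := by norm_num

lemma gaussianPDFReal_zero_one_le_exp_neg {x : ℝ} (hx : 2 ≤ x) :
    gaussianPDFReal 0 1 x ≤ exp (-x) := by
  have hπ : 1 ≤ √(2 * π) := Real.le_sqrt_of_sq_le (by nlinarith [pi_gt_three])
  rw [gaussianPDFReal_zero_one]
  calc (√(2 * π))⁻¹ * exp (-x ^ 2 / 2) ≤ 1 * exp (-x) := by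
        gcongr
        · exact inv_le_one_of_one_le₀ hπ
        · nlinarith
    _ = exp (-x) := one_mul _

lemma cdf_gaussianReal_sub_le {a b : ℝ} (hab : a ≤ b) : Φ b - Φ a ≤ 2 / 5 * (b - a) := by
  have h : gaussianReal 0 1 (Ioc a b) ≤ ENNReal.ofReal (2 / 5 * (b - a)) := by
    rw [gaussianReal_apply _ one_ne_zero]
    calc ∫⁻ x in Ioc a b, gaussianPDF 0 1 x ≤ ∫⁻ _ in Ioc a b, ENNReal.ofReal (2 / 5) :=
          setLIntegral_mono measurable_const fun x _ ↦
            ENNReal.ofReal_le_ofReal (gaussianPDFReal_zero_one_le x)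
      _ = ENNReal.ofReal (2 / 5 * (b - a)) := by
          rw [setLIntegral_const, volume_Ioc, ENNReal.ofReal_mul (by norm_num)]
  rw [← measure_cdf (gaussianReal 0 1), StieltjesFunction.measure_Ioc] at h
  exact (ENNReal.ofReal_le_ofReal_iff (by linarith)).1 h

lemma lipschitzWith_cdf_gaussianReal : LipschitzWith (2 / 5) Φ := by
  refine LipschitzWith.of_le_add_mul _ fun x y ↦ ?_
  rcases le_total x y with hxy | hyx
  · have : (0 : ℝ) ≤ (2 / 5 : NNReal) * dist x y := by positivity
    linarith [monotone_cdf (gaussianReal 0 1) hxy]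
  · have := cdf_gaussianReal_sub_le hyx
    rw [Real.dist_eq, abs_of_nonneg (sub_nonneg.2 hyx)]
    push_cast
    linarith

lemma cdf_gaussianReal_neg (x : ℝ) : Φ (-x) = 1 - Φ x := by
  have := nullSingletonClass_gaussianReal (μ := 0) one_ne_zero
  have hsymm : gaussianReal 0 1 (Iic (-x)) = gaussianReal 0 1 (Iic x)ᶜ := by
    conv_lhs => rw [← neg_zero, ← gaussianReal_map_neg]
    rw [Measure.map_apply measurable_neg measurableSet_Iic, compl_Iic,
      measure_congr Ioi_ae_eq_Ici]
    simp
  rw [cdf_eq_real, cdf_eq_real, measureReal_def, hsymm, ← measureReal_def,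
    probReal_compl_eq_one_sub measurableSet_Iic]

lemma cdf_gaussianReal_zero : Φ 0 = 1 / 2 := by
  have := cdf_gaussianReal_neg 0
  rw [neg_zero] at this
  linarith

lemma one_sub_cdf_gaussianReal_le {x : ℝ} (hx : 2 ≤ x) : 1 - Φ x ≤ exp (-x) := by
  have htail : 1 - Φ x = ∫ y in Ioi x, gaussianPDFReal 0 1 y := by
    rw [cdf_eq_real, ← probReal_compl_eq_one_sub measurableSet_Iic, compl_Iic, measureReal_def,
      gaussianReal_apply_eq_integral _ one_ne_zero,
      ENNReal.toReal_ofReal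
        (setIntegral_nonneg measurableSet_Ioi fun y _ ↦ gaussianPDFReal_nonneg 0 1 y)]
  rw [htail, ← integral_exp_neg_Ioi]
  exact setIntegral_mono_on (integrable_gaussianPDFReal 0 1).integrableOn
    (by simpa using exp_neg_integrableOn_Ioi x one_pos) measurableSet_Ioi
    fun y hy ↦ gaussianPDFReal_zero_one_le_exp_neg (hx.trans (le_of_lt hy))

lemma abs_lt_of_cdf_gaussianReal_mem {M q : ℝ} (hM : 2 ≤ M)
    (hq : Φ q ∈ Ioo (exp (-M)) (1 - exp (-M))) : |q| < M := by
  have hlow : Φ (-M) ≤ exp (-M) := by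
    rw [cdf_gaussianReal_neg]; exact one_sub_cdf_gaussianReal_le hM
  have hhigh : 1 - exp (-M) ≤ Φ M := by linarith [one_sub_cdf_gaussianReal_le hM]
  rw [abs_lt]
  exact ⟨(monotone_cdf _).reflect_lt (hlow.trans_lt hq.1),
    (monotone_cdf _).reflect_lt (hq.2.trans_le hhigh)⟩

section EmpiricalCDF

variable {R : ℕ} {t : Fin R → ℝ} {s : ℝ}

lemma unifMulti_Iic_toReal (t : Fin R → ℝ) (s : ℝ) :
    (unifMulti t (Iic s)).toReal = #{i | t i ≤ s} / R := by
  simp only [unifMulti, Measure.smul_apply, Measure.coe_finsetSum, Finset.sum_apply,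
    Measure.dirac_apply' _ measurableSet_Iic, indicator_apply, Set.mem_Iic, Pi.one_apply,
    Finset.sum_boole, smul_eq_mul, ENNReal.toReal_mul, ENNReal.toReal_inv, ENNReal.toReal_natCast]
  ring

lemma lt_card_filter_le_of_le (ht : Monotone t) {i : Fin R} (hi : t i ≤ s) :
    (i : ℕ) < #{j | t j ≤ s} := by
  have hsub : Finset.Iic i ⊆ ({j | t j ≤ s} : Finset _) := fun j hj ↦ by
    simpa using (ht (Finset.mem_Iic.1 hj)).trans hi
  simpa [Fin.card_Iic] using Finset.card_le_card hsub

lemma card_filter_le_le_of_lt (ht : Monotone t) {i : Fin R} (hi : s < t i) :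
    #{j | t j ≤ s} ≤ i := by
  have hsub : ({j | t j ≤ s} : Finset _) ⊆ Finset.Iio i := fun j hj ↦ by
    simp only [Finset.mem_filter, Finset.mem_univ, true_and] at hj
    simpa using ht.reflect_lt (hj.trans_lt hi)
  simpa [Fin.card_Iio] using Finset.card_le_card hsub

end EmpiricalCDF

noncomputable def binCenter (R i : ℕ) : ℝ := (2 * i + 1) / (2 * R)

lemma binCenter_eq (R i : ℕ) : binCenter R i = i / R + 1 / (2 * R) := by
  rw [binCenter, add_div, mul_div_mul_left _ _ two_ne_zero]

lemma strictMono_binCenter {R : ℕ} (hR : 0 < R) : StrictMono (binCenter R) := fun i j hij ↦ by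
  simp only [binCenter_eq]
  gcongr

lemma inv_two_mul_le_binCenter (R i : ℕ) : 1 / (2 * R) ≤ binCenter R i := by
  rw [binCenter_eq]
  linarith [(by positivity : (0 : ℝ) ≤ i / R)]

lemma binCenter_le_one_sub {R i : ℕ} (hi : i < R) : binCenter R i ≤ 1 - 1 / (2 * R) := by
  have hR : (0 : ℝ) < R := by exact_mod_cast (Nat.zero_le i).trans_lt hi
  have hiR : (i : ℝ) + 1 ≤ R := by exact_mod_cast hi
  rw [binCenter, div_le_iff₀ (by positivity)]
  field_simp
  linarith

theorem kolDist_unifMulti_le {μ : Measure ℝ} [IsProbabilityMeasure μ] {R : ℕ} (hR : 0 < R)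
    {t : Fin R → ℝ} (ht : Monotone t) {β : ℝ}
    (h : ∀ i : Fin R, |cdf μ (t i) - binCenter R i| ≤ β) :
    kolDist (unifMulti t) μ ≤ 1 / (2 * R) + β := by
  have hβ : 0 ≤ β := (abs_nonneg _).trans (h ⟨0, hR⟩)
  have hR' : (0 : ℝ) < R := by exact_mod_cast hR
  refine ciSup_le fun s ↦ ?_
  rw [unifMulti_Iic_toReal, ← measureReal_def, ← cdf_eq_real]
  set k := #{i | t i ≤ s}
  have hkR : k ≤ R := (Finset.card_filter_le _ _).trans_eq (Finset.card_fin R)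
  -- with `k` of the points at most `s`, monotonicity gives `t (k - 1) ≤ s < t k`
  rw [abs_le]
  constructor
  · rcases hkR.lt_or_eq with hk | hk
    · have hs : s < t ⟨k, hk⟩ := not_le.1 fun hle ↦ (lt_card_filter_le_of_le ht hle).false
      have := (abs_le.1 (h ⟨k, hk⟩)).2
      rw [binCenter_eq] at this
      linarith [monotone_cdf μ hs.le]
    · rw [hk, div_self hR'.ne']
      linarith [cdf_le_one μ s, one_div_pos.2 (mul_pos two_pos hR')]
  · by_cases hk0 : k = 0
    · rw [hk0, Nat.cast_zero, zero_div]
      linarith [cdf_nonneg μ s, one_div_pos.2 (mul_pos two_pos hR')]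
    obtain ⟨m, hm⟩ := Nat.exists_eq_add_one_of_ne_zero hk0
    have hmR : m < R := by omega
    have hs : t ⟨m, hmR⟩ ≤ s := not_lt.1 fun hlt ↦ by
      have := card_filter_le_le_of_lt ht hlt
      simp only at this
      omega
    have := (abs_le.1 (h ⟨m, hmR⟩)).1
    rw [binCenter_eq] at this
    have hsplit : (k : ℝ) / R = m / R + 1 / R := by rw [hm]; push_cast; ring
    have hhalf : 1 / (R : ℝ) = 1 / (2 * R) + 1 / (2 * R) := by field_simp; ring
    linarith [monotone_cdf μ hs]

lemma kolDist_unifMulti_zero_le {R : ℕ} (hR : 0 < R) :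
    kolDist (unifMulti fun _ : Fin R ↦ (0 : ℝ)) (gaussianReal 0 1) ≤ 1 / 2 := by
  have h := kolDist_unifMulti_le hR monotone_const (β := 1 / 2 - 1 / (2 * R)) fun i ↦ by
    rw [cdf_gaussianReal_zero, abs_le]
    constructor <;> linarith [inv_two_mul_le_binCenter R i, binCenter_le_one_sub i.2]
  linarith

lemma exp_neg_lt_inv_two_pow {n : ℕ} (hn : n ≠ 0) : exp (-n) < (2 ^ n)⁻¹ := by
  rw [exp_neg, ← exp_one_pow]
  exact inv_strictAnti₀ (by positivity)
    (pow_lt_pow_left₀ (by linarith [exp_one_gt_d9]) zero_le_two hn)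

lemma exists_gaussian_bin_quantiles (j : ℕ) :
    ∃ q : Fin (4 * 2 ^ j) → ℝ, Monotone q ∧ (∀ i, Φ (q i) = binCenter (4 * 2 ^ j) i) ∧
      ∀ i, |q i| < j + 3 := by
  set R := 4 * 2 ^ j
  have hR : 0 < R := by positivity
  have hδ : exp (-(j + 3 : ℕ)) < 1 / (2 * R) := by
    convert exp_neg_lt_inv_two_pow (n := j + 3) (by omega) using 1
    simp only [R]
    push_cast
    ring
  have hp : ∀ i : Fin R,
      binCenter R i ∈ Ioo (exp (-(j + 3 : ℕ))) (1 - exp (-(j + 3 : ℕ))) := fun i ↦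
    ⟨hδ.trans_le (inv_two_mul_le_binCenter R i), (binCenter_le_one_sub i.2).trans_lt (by linarith)⟩
  obtain ⟨q, hq_mono, hq⟩ := exists_strictMono_cdf_eq lipschitzWith_cdf_gaussianReal.continuous
    ((strictMono_binCenter hR).comp Fin.val_strictMono)
    fun i ↦ Ioo_subset_Ioo (exp_pos _).le (by linarith [exp_pos (-(j + 3 : ℕ) : ℝ)]) (hp i)
  refine ⟨q, hq_mono.monotone, hq, fun i ↦ ?_⟩
  have := abs_lt_of_cdf_gaussianReal_mem (M := (j + 3 : ℕ)) (by push_cast; linarith)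
    (by rw [hq i]; exact hp i)
  exact_mod_cast this

lemma abs_floor_le_of_abs_lt {x : ℝ} {m : ℤ} (h : |x| < m) : |(⌊x⌋ : ℝ)| ≤ m := by
  rw [abs_lt] at h
  rw [abs_le]
  exact ⟨by exact_mod_cast Int.le_floor.2 (by push_cast; linarith), (Int.floor_le x).trans h.2.le⟩

lemma abs_cdf_gaussianReal_floor_div_sub_le {N : ℝ} (hN : 0 < N) (q : ℝ) :
    |Φ (⌊q * N⌋ / N) - Φ q| ≤ 2 / (5 * N) := by
  have hle : ⌊q * N⌋ / N ≤ q := (div_le_iff₀ hN).2 (Int.floor_le _)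
  have hgap : q - ⌊q * N⌋ / N ≤ 1 / N := by
    rw [sub_le_iff_le_add, ← add_div, le_div_iff₀ hN]
    linarith [Int.lt_floor_add_one (q * N)]
  rw [abs_sub_comm, abs_of_nonneg (sub_nonneg.2 (monotone_cdf _ hle))]
  calc Φ q - Φ (⌊q * N⌋ / N) ≤ 2 / 5 * (q - ⌊q * N⌋ / N) := cdf_gaussianReal_sub_le hle
    _ ≤ 2 / 5 * (1 / N) := by gcongr
    _ = 2 / (5 * N) := by ring

theorem exists_dyadic_gaussian_approx (j : ℕ) :
    ∃ t : Fin (4 * 2 ^ j) → ℝ,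
      (∀ i, ∃ a : ℤ, t i = a / 2 ^ j ∧ |(a : ℝ)| ≤ (j + 3) * 2 ^ j) ∧
      kolDist (unifMulti t) (gaussianReal 0 1) ≤ (2 ^ j)⁻¹ := by
  obtain ⟨q, hq_mono, hq_cdf, hq_abs⟩ := exists_gaussian_bin_quantiles j
  have hN : (0 : ℝ) < 2 ^ j := by positivity
  refine ⟨fun i ↦ ⌊q i * 2 ^ j⌋ / 2 ^ j, fun i ↦ ⟨_, rfl, ?_⟩, ?_⟩
  · have := abs_floor_le_of_abs_lt (x := q i * 2 ^ j) (m := (j + 3) * 2 ^ j) (by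
      push_cast
      rw [abs_mul, abs_of_pos hN]
      gcongr
      exact hq_abs i)
    exact_mod_cast this
  · have hmono : Monotone fun i ↦ (⌊q i * 2 ^ j⌋ : ℝ) / 2 ^ j := fun i i' h ↦ by
      dsimp only
      gcongr
      exact hq_mono h
    calc kolDist _ _ ≤ 1 / (2 * ↑(4 * 2 ^ j : ℕ)) + 2 / (5 * 2 ^ j) :=
          kolDist_unifMulti_le (by positivity) hmono fun i ↦ by
            rw [← hq_cdf i]
            exact abs_cdf_gaussianReal_floor_div_sub_le hN (q i)
      _ ≤ (2 ^ j)⁻¹ := by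
          push_cast
          field_simp
          norm_num

lemma add_three_le_three_mul_log_two_pow_rpow {j : ℕ} (hj : 2 ≤ j) :
    (j : ℝ) + 3 ≤ 3 * log (2 ^ j) ^ (3 : ℝ) := by
  have hj' : (2 : ℝ) ≤ j := by exact_mod_cast hj
  have hlog : 0.69 * j ≤ log (2 ^ j) := by
    rw [log_pow]
    nlinarith [log_two_gt_d9]
  have hcube := pow_le_pow_left₀ (by positivity) hlog 3
  have hj3 : 4 * (j : ℝ) ≤ j ^ 3 := by
    nlinarith [mul_nonneg (mul_nonneg (sub_nonneg.2 hj') j.cast_nonneg)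
      (by positivity : (0 : ℝ) ≤ j + 2)]
  rw [rpow_ofNat]
  nlinarith

/-- There are absolute constants C > 0 (a positive integer) and C' > 0 such
that for every ε = 2^{-j} (j ∈ ℕ) there is a multiset T of 4/ε reals, each of the form
a/(C/ε) with a ∈ ℤ, |a| ≤ C'·(1/ε)·log(1/ε)^{C'}, with d_K(D_T, N(0,1)) ≤ ε. -/
theorem stmt_10 : ∃ C : ℕ, 0 < C ∧ ∃ C' : ℝ, 0 < C' ∧
    ∀ j : ℕ, ∃ t : Fin (4 * 2 ^ j) → ℝ,
      (∀ i, ∃ a : ℤ, t i = (a : ℝ) / ((C : ℝ) * 2 ^ j) ∧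
        |(a : ℝ)| ≤ C' * 2 ^ j * (Real.log ((2 : ℝ) ^ j)) ^ C') ∧
      kolDist (unifMulti t) (gaussianReal 0 1) ≤ ((2 : ℝ) ^ j)⁻¹ := by
  refine ⟨1, one_pos, 3, by norm_num, fun j ↦ ?_⟩
  rcases lt_or_ge j 2 with hj | hj
  · refine ⟨fun _ ↦ 0, fun _ ↦ ⟨0, by simp, ?_⟩, ?_⟩
    · have : 0 ≤ log ((2 : ℝ) ^ j) := log_nonneg (one_le_pow₀ one_le_two)
      rw [Int.cast_zero, abs_zero]
      positivity
    · calc kolDist _ _ ≤ 1 / 2 := kolDist_unifMulti_zero_le (by positivity)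
        _ ≤ ((2 : ℝ) ^ j)⁻¹ := by interval_cases j <;> norm_num
  · obtain ⟨t, ht, hkol⟩ := exists_dyadic_gaussian_approx j
    refine ⟨t, fun i ↦ ?_, hkol⟩
    obtain ⟨a, hta, ha⟩ := ht i
    refine ⟨a, by rw [hta, Nat.cast_one, one_mul], ha.trans ?_⟩
    calc ((j : ℝ) + 3) * 2 ^ j ≤ 3 * log (2 ^ j) ^ (3 : ℝ) * 2 ^ j := by
          gcongr
          exact add_three_le_three_mul_log_two_pow_rpow hj
      _ = 3 * 2 ^ j * log (2 ^ j) ^ (3 : ℝ) := by ring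
end

section
/- Let A' ∈ ℝ^{n×n} be a symmetric matrix all of whose eigenvalues λ'₁, …, λ'ₙ are non-negative, with corresponding orthonormal eigenvectors v₁, …, vₙ, and let λ_max(A') denote its largest eigenvalue. Let δ ∈ (0,1) and let w be a unit vector with ‖A'·w‖₂² ≥ (1−δ)²·λ_max(A')². Write w = Σ_{i=1}^n c_i·v_i and let S = {i ∈ [n] : λ'_i ≥ (1−√δ)·λ_max(A')}. Then Σ_{i∉S} c_i² ≤ 2√δ. -/
/-!
In the eigenbasis, `‖w‖² = ∑ cᵢ² = 1` and `‖A'w‖² = ∑ cᵢ² λᵢ²`. Bounding `λᵢ` by the threshold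
`(1 - √δ) λmax` off `S` and by `λmax` on `S` gives `(1 - δ)² ≤ (1 - √δ)² T + (1 - T)` for the
mass `T` off `S`, and this forces `T ≤ 2√δ`.
-/

open Matrix Finset

section EigenExpansion

variable {R ι m : Type*} [CommSemiring R] [Fintype ι] [Fintype m]

theorem sum_smul_dotProduct_sum_smul_of_orthonormal [DecidableEq ι] {v : ι → m → R}
    (horth : ∀ i j, v i ⬝ᵥ v j = if i = j then 1 else 0) (a b : ι → R) :
    (∑ i, a i • v i) ⬝ᵥ (∑ j, b j • v j) = ∑ i, a i * b i := by
  simp only [sum_dotProduct, dotProduct_sum, smul_dotProduct, dotProduct_smul, horth,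
    smul_eq_mul, mul_ite, mul_one, mul_zero, sum_ite_eq', mem_univ, if_true, mul_comm]

theorem mulVec_sum_smul_of_eigen (A : Matrix m m R) {v : ι → m → R} {lam : ι → R}
    (heig : ∀ i, A *ᵥ v i = lam i • v i) (c : ι → R) :
    A *ᵥ ∑ i, c i • v i = ∑ i, (c i * lam i) • v i := by
  simp only [mulVec_sum, mulVec_smul, heig, smul_smul]

end EigenExpansion

theorem sum_mul_sq_le_of_threshold {ι : Type*} (s : Finset ι) {p μ : ι → ℝ} {M : ℝ}
    (hp : ∀ i ∈ s, 0 ≤ p i) (hμ0 : ∀ i ∈ s, 0 ≤ μ i) (hμM : ∀ i ∈ s, μ i ≤ M) (θ : ℝ) :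
    ∑ i ∈ s, p i * μ i ^ 2 ≤
      θ ^ 2 * ∑ i ∈ s with μ i < θ, p i + M ^ 2 * ∑ i ∈ s with ¬ μ i < θ, p i := by
  rw [← sum_filter_add_sum_filter_not s (fun i => μ i < θ), mul_sum, mul_sum]
  refine add_le_add (sum_le_sum fun i hi => ?_) (sum_le_sum fun i hi => ?_)
  · obtain ⟨his, hlt⟩ := mem_filter.1 hi
    rw [mul_comm]
    exact mul_le_mul_of_nonneg_right (pow_le_pow_left₀ (hμ0 i his) hlt.le 2) (hp i his)
  · have his := (mem_filter.1 hi).1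
    rw [mul_comm]
    exact mul_le_mul_of_nonneg_right (pow_le_pow_left₀ (hμ0 i his) (hμM i his) 2) (hp i his)

theorem le_two_mul_sqrt_of_sq_one_sub_le {δ T : ℝ} (hδ0 : 0 < δ) (hδ1 : δ < 1)
    (h : (1 - δ) ^ 2 ≤ (1 - √δ) ^ 2 * T + (1 - T)) : T ≤ 2 * √δ := by
  have hs0 : 0 < √δ := Real.sqrt_pos.2 hδ0
  have hs1 : √δ < 1 := (Real.sqrt_lt' one_pos).2 (by simpa using hδ1)
  have hsq : √δ ^ 2 = δ := Real.sq_sqrt hδ0.le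
  -- With s = √δ the hypothesis reads T s (2 - s) ≤ s² (2 - s²), and 2 - s² ≤ 2 (2 - s).
  nlinarith [mul_pos hs0 (sub_pos.2 hs1), sq_nonneg (1 - √δ)]

theorem stmt_12_general {n : ℕ} (A' : Matrix (Fin n) (Fin n) ℝ)
    (lam : Fin n → ℝ) (v : Fin n → (Fin n → ℝ))
    (horth : ∀ i j, v i ⬝ᵥ v j = if i = j then 1 else 0)
    (heig : ∀ i, A'.mulVec (v i) = lam i • v i)
    (hpos : ∀ i, 0 ≤ lam i)
    (lmax : ℝ) (hmax : ∀ i, lam i ≤ lmax) (hmem : ∃ i, lam i = lmax)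
    (δ : ℝ) (hδ0 : 0 < δ) (hδ1 : δ < 1)
    (w : Fin n → ℝ) (hw : w ⬝ᵥ w = 1)
    (hAw : (1 - δ) ^ 2 * lmax ^ 2 ≤ A'.mulVec w ⬝ᵥ A'.mulVec w)
    (c : Fin n → ℝ) (hc : w = ∑ i, c i • v i) :
    ∑ i ∈ Finset.univ.filter (fun i => lam i < (1 - Real.sqrt δ) * lmax), (c i) ^ 2 ≤
      2 * Real.sqrt δ := by
  obtain ⟨i₀, rfl⟩ := hmem
  rcases (hpos i₀).eq_or_lt with hzero | hlmax
  · simp [← hzero, not_lt.2 (hpos _)]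
  have hnorm : ∑ i, c i ^ 2 = 1 := by
    simpa [hc, sum_smul_dotProduct_sum_smul_of_orthonormal horth, sq] using hw
  have hAnorm : A' *ᵥ w ⬝ᵥ A' *ᵥ w = ∑ i, c i ^ 2 * lam i ^ 2 := by
    rw [hc, mulVec_sum_smul_of_eigen A' heig, sum_smul_dotProduct_sum_smul_of_orthonormal horth]
    exact sum_congr rfl fun i _ => by ring
  have hrest : ∑ i with ¬ lam i < (1 - √δ) * lam i₀, c i ^ 2 =
      1 - ∑ i with lam i < (1 - √δ) * lam i₀, c i ^ 2 := by
    linarith [sum_filter_add_sum_filter_not univ (fun i => lam i < (1 - √δ) * lam i₀)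
      fun i => c i ^ 2]
  have hsplit := sum_mul_sq_le_of_threshold univ (p := fun i => c i ^ 2)
    (fun i _ => sq_nonneg (c i)) (fun i _ => hpos i) (fun i _ => hmax i) ((1 - √δ) * lam i₀)
  apply le_two_mul_sqrt_of_sq_one_sub_le hδ0 hδ1
  refine le_of_mul_le_mul_right ?_ (pow_pos hlmax 2)
  calc (1 - δ) ^ 2 * lam i₀ ^ 2 ≤ ∑ i, c i ^ 2 * lam i ^ 2 := hAnorm ▸ hAw
    _ ≤ _ := hsplit
    _ = _ := by rw [hrest]; ring

/-- Let A' be symmetric with non-negative eigenvalues λ'ᵢ and orthonormal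
eigenvectors vᵢ, largest eigenvalue λmax.  If w is a unit vector with
‖A'w‖₂² ≥ (1−δ)²·λmax², writing w = Σ cᵢ vᵢ and S = {i : λ'ᵢ ≥ (1−√δ)·λmax}, then
Σ_{i∉S} cᵢ² ≤ 2√δ. -/
theorem stmt_12 {n : ℕ} (A' : Matrix (Fin n) (Fin n) ℝ) (hA' : A'.IsSymm)
    (lam : Fin n → ℝ) (v : Fin n → (Fin n → ℝ))
    (horth : ∀ i j, v i ⬝ᵥ v j = if i = j then 1 else 0)
    (heig : ∀ i, A'.mulVec (v i) = lam i • v i)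
    (hpos : ∀ i, 0 ≤ lam i)
    (lmax : ℝ) (hmax : ∀ i, lam i ≤ lmax) (hmem : ∃ i, lam i = lmax)
    (δ : ℝ) (hδ0 : 0 < δ) (hδ1 : δ < 1)
    (w : Fin n → ℝ) (hw : w ⬝ᵥ w = 1)
    (hAw : (1 - δ) ^ 2 * lmax ^ 2 ≤ A'.mulVec w ⬝ᵥ A'.mulVec w)
    (c : Fin n → ℝ) (hc : w = ∑ i, c i • v i) :
    ∑ i ∈ Finset.univ.filter (fun i => lam i < (1 - Real.sqrt δ) * lmax), (c i) ^ 2 ≤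
      2 * Real.sqrt δ :=
  stmt_12_general A' lam v horth heig hpos lmax hmax hmem δ hδ0 hδ1 w hw hAw c hc
end
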